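/- Let G be a graph, p an outer vertex of G, and q a vertex adjacent to p via the edge pq. Then the codegeneracy and outer coface relation holds: σ^p ∘ δ^q = δ^q ∘ σ^{pq}; that is, deleting the outer vertex and then collapsing commutes with first collapsing the subdivided edge and then deleting, as graphical maps. -/

import Mathlib

/-!  A formalization of the graphical category of finite (connected) multigraphs
with legs, loops and parallel edges, following the half-edge encoding:
a graph is given by a finite set of vertices, a finite set of half-edges,
an involution pairing the two halves of an edge (legs and free edges have a
fixed or unattached half), and an attachment map.  Graphical maps are encoded
by their action on (half-)edges together with the assignment of an embedded
subgraph (given by its vertex set and its ι-closed set of half-edges) to each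
vertex; `PreGMap.EqOn G f g` is equality of graphical maps out of `G`. -/

structure HalfEdgeGraph where
  V : Finset ℕ
  H : Finset ℕ
  ι : ℕ → ℕ
  att : ℕ → Option ℕ

namespace HalfEdgeGraph

/-- Two vertices are adjacent when some edge joins them. -/
def Adj (G : HalfEdgeGraph) (v w : ℕ) : Prop :=
  ∃ h ∈ G.H, G.att h = some v ∧ G.att (G.ι h) = some w

/-- Connectedness of a graph. -/
def Connected (G : HalfEdgeGraph) : Prop :=
  ∀ v ∈ G.V, ∀ w ∈ G.V, Relation.ReflTransGen G.Adj v w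

/-- Well-formedness: the involution and the attachment are internal to the
graph, and the graph is connected (graphs are finite connected multigraphs). -/
def Wf (G : HalfEdgeGraph) : Prop :=
  (∀ h ∈ G.H, G.ι h ∈ G.H) ∧
  (∀ h ∈ G.H, G.ι (G.ι h) = h) ∧
  (∀ h ∈ G.H, ∀ v, G.att h = some v → v ∈ G.V) ∧
  G.Connected

/-- `h` is (a half of) an inner edge: both ends are attached to vertices. -/
def IsInnerEdge (G : HalfEdgeGraph) (h : ℕ) : Prop :=
  h ∈ G.H ∧ h ≠ G.ι h ∧ (G.att h).isSome ∧ (G.att (G.ι h)).isSome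

/-- `h` is (a half of) a loop: an edge from a vertex to itself. -/
def IsLoop (G : HalfEdgeGraph) (h : ℕ) : Prop :=
  h ∈ G.H ∧ h ≠ G.ι h ∧ ∃ v, G.att h = some v ∧ G.att (G.ι h) = some v

/-- The number of non-leg edges incident to `v` (a loop counts once). -/
def nonLegEdgeCount (G : HalfEdgeGraph) (v : ℕ) : ℕ :=
  (G.H.filter fun h => G.att h = some v ∧ (G.att (G.ι h)).isSome ∧ G.att (G.ι h) ≠ some v).card +
  (G.H.filter fun h => G.att h = some v ∧ G.att (G.ι h) = some v ∧ h ≠ G.ι h).card / 2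

/-- An outer vertex: at most one incident non-leg edge. -/
def IsOuterVertex (G : HalfEdgeGraph) (v : ℕ) : Prop :=
  v ∈ G.V ∧ G.nonLegEdgeCount v ≤ 1

/-- The corolla at `v`, as an embedded subgraph (vertex set and half-edges). -/
def corolla (G : HalfEdgeGraph) (v : ℕ) : Finset ℕ × Finset ℕ :=
  ({v}, G.H.filter fun h => G.att h = some v ∨ G.att (G.ι h) = some v)

/-- `G/b`: contract the (non-loop) inner edge `b`, merging its two endpoints
into the single vertex `min x y`. -/
def contract (G : HalfEdgeGraph) (b : ℕ) : HalfEdgeGraph :=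
  let x := (G.att b).getD 0
  let y := (G.att (G.ι b)).getD 0
  let z := min x y
  let H' := G.H.filter fun h => h ≠ b ∧ h ≠ G.ι b
  { V := insert z ((G.V.erase x).erase y)
    H := H'
    ι := fun h => if h ∈ H' then G.ι h else h
    att := fun h => if h ∈ H' then
        (if G.att h = some x ∨ G.att h = some y then some z else G.att h) else none }

/-- `G/v`: delete the (outer) vertex `v` together with its legs and loops;
edges joining `v` to other vertices become legs. -/
def delVertex (G : HalfEdgeGraph) (v : ℕ) : HalfEdgeGraph :=
  let H' := G.H.filter fun h =>
    ¬ ((G.att h = some v ∨ G.att (G.ι h) = some v) ∧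
       (G.att h = some v ∨ G.att h = none) ∧
       (G.att (G.ι h) = some v ∨ G.att (G.ι h) = none))
  { V := G.V.erase v
    H := H'
    ι := fun h => if h ∈ H' then G.ι h else h
    att := fun h => if h ∈ H' then (if G.att h = some v then none else G.att h) else none }

/-- `G/ℓ`: snip the loop (or cut the edge) `l` into two legs, with fresh
half-edges `a` and `b` as the new free ends. -/
def snip (G : HalfEdgeGraph) (l a b : ℕ) : HalfEdgeGraph :=
  let H' := insert a (insert b G.H)
  { V := G.V
    H := H'
    ι := fun h => if h ∈ H' then
        (if h = l then a else if h = a then l else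
         if h = G.ι l then b else if h = b then G.ι l else G.ι h) else h
    att := fun h => if h ∈ H' then (if h = a ∨ h = b then none else G.att h) else none }

/-- `G_b`: subdivide the edge `b` by one new bivalent vertex `u`,
splitting `b` into the two edges `{b, n₁}` and `{n₂, ι b}`. -/
def subdiv (G : HalfEdgeGraph) (b u n₁ n₂ : ℕ) : HalfEdgeGraph :=
  let H' := insert n₁ (insert n₂ G.H)
  { V := insert u G.V
    H := H'
    ι := fun h => if h ∈ H' then
        (if h = b then n₁ else if h = n₁ then b else
         if h = n₂ then (if G.ι b = b then n₂ else G.ι b) else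
         if h = G.ι b then n₂ else G.ι h) else h
    att := fun h => if h ∈ H' then (if h = n₁ ∨ h = n₂ then some u else G.att h) else none }

/-- Validity of the data of a subdivision: `b` is an edge and the new names are fresh. -/
def IsDegen (G : HalfEdgeGraph) (b u n₁ n₂ : ℕ) : Prop :=
  b ∈ G.H ∧ u ∉ G.V ∧ n₁ ∉ G.H ∧ n₂ ∉ G.H ∧ n₁ ≠ n₂

end HalfEdgeGraph

/-- The data of a graphical map: a map on half-edges (inducing the map `f₀` on
edges) and, for each vertex, an embedded subgraph of the target
(its vertex set together with its set of half-edges). -/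
structure PreGMap where
  e : ℕ → ℕ
  vimg : ℕ → Finset ℕ × Finset ℕ

/-- Composition of graphical maps: compose on edges; the embedded subgraph at a
vertex is assembled by substituting the images of the vertices of its image. -/
def PreGMap.comp (g f : PreGMap) : PreGMap where
  e := g.e ∘ f.e
  vimg := fun v =>
    ((f.vimg v).1.biUnion fun w => (g.vimg w).1,
     (f.vimg v).2.image g.e ∪ (f.vimg v).1.biUnion fun w => (g.vimg w).2)

/-- Equality of graphical maps out of `G` (extensional equality of `f₀` and `f₁`). -/
def PreGMap.EqOn (G : HalfEdgeGraph) (f g : PreGMap) : Prop :=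
  (∀ h ∈ G.H, f.e h = g.e h) ∧ ∀ v ∈ G.V, f.vimg v = g.vimg v

namespace HalfEdgeGraph

/-- The identity graphical map of `G`. -/
def idMap (G : HalfEdgeGraph) : PreGMap := ⟨id, G.corolla⟩

/-- The inner coface map `δ^b : G/b → G`: identity on edges, sending the merged
vertex to the embedded barbell subgraph of `G` around `b`, and every other
vertex to its corolla. -/
def innerCoface (G : HalfEdgeGraph) (b : ℕ) : PreGMap :=
  let x := (G.att b).getD 0
  let y := (G.att (G.ι b)).getD 0
  { e := id
    vimg := fun v => if v = min x y then
        ({x, y}, G.H.filter fun h =>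
          G.att h = some x ∨ G.att h = some y ∨
          G.att (G.ι h) = some x ∨ G.att (G.ι h) = some y)
      else G.corolla v }

/-- The outer coface map `δ^v : G/v → G`: identity on edges, every vertex to its corolla. -/
def outerCoface (G : HalfEdgeGraph) (_v : ℕ) : PreGMap := ⟨id, G.corolla⟩

/-- The cosnip map `δ^ℓ : G/ℓ → G`: both new legs are sent to the loop `l`,
identity on vertices. -/
def cosnip (G : HalfEdgeGraph) (l a b : ℕ) : PreGMap :=
  { e := fun h => if h = a then G.ι l else if h = b then l else h
    vimg := G.corolla }

/-- The codegeneracy map `σ^b : G_b → G`: the two halves of the subdivided edge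
are sent to `b`, the new bivalent vertex to the edge graph `η_b`, and every
other vertex to its corolla. -/
def codegeneracy (G : HalfEdgeGraph) (b u n₁ n₂ : ℕ) : PreGMap :=
  { e := fun h => if h = n₁ then G.ι b else if h = n₂ then b else h
    vimg := fun v => if v = u then ((∅ : Finset ℕ), ({b, G.ι b} : Finset ℕ))
      else G.corolla v }

/-- The conditions for `f` to be a graphical map `G → G'`: it maps edges to
edges, each vertex to an embedded subgraph of `G'`, the vertex sets of the
images are disjoint and together exhaust the vertices of `G'`, and boundaries
match: each half-edge at `v` is sent into the subgraph at `v`. -/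
def IsGMap (G G' : HalfEdgeGraph) (f : PreGMap) : Prop :=
  (∀ h ∈ G.H, f.e h ∈ G'.H ∧ (f.e (G.ι h) = f.e h ∨ f.e (G.ι h) = G'.ι (f.e h))) ∧
  (∀ v ∈ G.V, (f.vimg v).1 ⊆ G'.V ∧ (f.vimg v).2 ⊆ G'.H) ∧
  (∀ v ∈ G.V, ∀ w ∈ G.V, v ≠ w → Disjoint (f.vimg v).1 (f.vimg w).1) ∧
  G.V.biUnion (fun v => (f.vimg v).1) = G'.V ∧
  (∀ v ∈ G.V, ∀ h ∈ G.H, G.att h = some v → f.e h ∈ (f.vimg v).2)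

end HalfEdgeGraph

/-- The three kinds of coface maps: inner cofaces, outer cofaces, and cosnips. -/
inductive CofaceKind where
  | inner (e : ℕ)
  | outer (v : ℕ)
  | snip (l a b : ℕ)

namespace HalfEdgeGraph

/-- The source of the coface map of kind `k` into `G`. -/
def cofaceSource (G : HalfEdgeGraph) : CofaceKind → HalfEdgeGraph
  | .inner e => G.contract e
  | .outer v => G.delVertex v
  | .snip l a b => G.snip l a b

/-- The coface map of kind `k` into `G`. -/
def cofaceMap (G : HalfEdgeGraph) : CofaceKind → PreGMap
  | .inner e => G.innerCoface e
  | .outer v => G.outerCoface v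
  | .snip l a b => G.cosnip l a b

/-- Validity of a coface map into `G`: inner cofaces contract non-loop inner
edges, outer cofaces delete outer vertices, cosnips snip loops (with fresh
names, leaving the graph connected). -/
def IsCoface (G : HalfEdgeGraph) : CofaceKind → Prop
  | .inner e => G.IsInnerEdge e ∧ ¬ G.IsLoop e
  | .outer v => G.IsOuterVertex v
  | .snip l a b => G.IsLoop l ∧ a ∉ G.H ∧ b ∉ G.H ∧ a ≠ b ∧ (G.snip l a b).Connected

end HalfEdgeGraph

/-- `CofaceSeq G₁ G₂ f`: `f : G₁ → G₂` is a composite of a sequence of coface maps. -/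
inductive CofaceSeq : HalfEdgeGraph → HalfEdgeGraph → PreGMap → Prop where
  | nil (G : HalfEdgeGraph) : CofaceSeq G G G.idMap
  | cons {G₁ G₂ : HalfEdgeGraph} {f : PreGMap} (k : CofaceKind) (hk : G₂.IsCoface k)
      (h : CofaceSeq G₁ (G₂.cofaceSource k) f) :
      CofaceSeq G₁ G₂ ((G₂.cofaceMap k).comp f)

/-- `DegenSeq G₁ G₂ f`: `f : G₁ → G₂` is a composite of a sequence of codegeneracy maps. -/
inductive DegenSeq : HalfEdgeGraph → HalfEdgeGraph → PreGMap → Prop where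
  | nil (G : HalfEdgeGraph) : DegenSeq G G G.idMap
  | cons {G₁ G₂ : HalfEdgeGraph} {f : PreGMap} (b u n₁ n₂ : ℕ) (hb : G₂.IsDegen b u n₁ n₂)
      (h : DegenSeq G₁ (G₂.subdiv b u n₁ n₂) f) :
      DegenSeq G₁ G₂ ((G₂.codegeneracy b u n₁ n₂).comp f)

/-- `ElemSeq G₁ G₂ f`: `f : G₁ → G₂` is an arbitrary composite of coface and
codegeneracy maps. -/
inductive ElemSeq : HalfEdgeGraph → HalfEdgeGraph → PreGMap → Prop where
  | nil (G : HalfEdgeGraph) : ElemSeq G G G.idMap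
  | coface {G₁ G₂ : HalfEdgeGraph} {f : PreGMap} (k : CofaceKind) (hk : G₂.IsCoface k)
      (h : ElemSeq G₁ (G₂.cofaceSource k) f) :
      ElemSeq G₁ G₂ ((G₂.cofaceMap k).comp f)
  | degen {G₁ G₂ : HalfEdgeGraph} {f : PreGMap} (b u n₁ n₂ : ℕ) (hb : G₂.IsDegen b u n₁ n₂)
      (h : ElemSeq G₁ (G₂.subdiv b u n₁ n₂) f) :
      ElemSeq G₁ G₂ ((G₂.codegeneracy b u n₁ n₂).comp f)

/-! Deleting `q` and subdividing `b` act on disjoint parts of `G`: `b` keeps its end at `p ≠ q`,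
so it survives the deletion, and the new vertex `u` with its half-edges `n₁`, `n₂` is never
incident to `q`. Hence `(G_b)/q = (G/q)_b`. On this graph both composites send half-edges by
the same rule, at `u` both give the edge `{b, ι b}`, and at any other vertex `v` both give the
corolla of `v` in `G`: the half-edges at `v` in `G/q`, and the images under `σ^b` of those at
`v` in `G_b`, already lie in it. -/

attribute [ext] HalfEdgeGraph

namespace HalfEdgeGraph

variable {G : HalfEdgeGraph} {b u n₁ n₂ p q v w h : ℕ}

lemma corolla_fst : (G.corolla v).1 = {v} := rfl

lemma mem_corolla_snd :
    h ∈ (G.corolla v).2 ↔ h ∈ G.H ∧ (G.att h = some v ∨ G.att (G.ι h) = some v) :=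
  Finset.mem_filter

lemma mem_delVertex_H :
    h ∈ (G.delVertex q).H ↔ h ∈ G.H ∧
      ¬ ((G.att h = some q ∨ G.att (G.ι h) = some q) ∧
         (G.att h = some q ∨ G.att h = none) ∧
         (G.att (G.ι h) = some q ∨ G.att (G.ι h) = none)) :=
  Finset.mem_filter

lemma mem_delVertex_H_of_att_eq_some (hh : h ∈ G.H) (hw : G.att h = some w) (hwq : w ≠ q) :
    h ∈ (G.delVertex q).H :=
  mem_delVertex_H.2 ⟨hh, by simp [hw, hwq]⟩

lemma mem_delVertex_H_of_att_ι_eq_some (hh : h ∈ G.H) (hw : G.att (G.ι h) = some w)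
    (hwq : w ≠ q) : h ∈ (G.delVertex q).H :=
  mem_delVertex_H.2 ⟨hh, by simp [hw, hwq]⟩

lemma delVertex_ι_of_mem (hh : h ∈ (G.delVertex q).H) : (G.delVertex q).ι h = G.ι h :=
  if_pos hh

lemma delVertex_att_of_mem (hh : h ∈ (G.delVertex q).H) :
    (G.delVertex q).att h = if G.att h = some q then none else G.att h :=
  if_pos hh

lemma att_eq_some_of_delVertex (hw : (G.delVertex q).att h = some w) : G.att h = some w := by
  simp only [delVertex] at hw
  split_ifs at hw
  exact hw

lemma corolla_delVertex_subset : ((G.delVertex q).corolla v).2 ⊆ (G.corolla v).2 := by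
  intro h hh
  obtain ⟨hhD, hv⟩ := mem_corolla_snd.1 hh
  rw [delVertex_ι_of_mem hhD] at hv
  exact mem_corolla_snd.2 ⟨(mem_delVertex_H.1 hhD).1,
    hv.imp att_eq_some_of_delVertex att_eq_some_of_delVertex⟩

lemma mem_subdiv_H : h ∈ (G.subdiv b u n₁ n₂).H ↔ h = n₁ ∨ h = n₂ ∨ h ∈ G.H := by
  simp [subdiv]

lemma subdiv_ι_of_mem_subdiv (hh : h ∈ (G.subdiv b u n₁ n₂).H) :
    (G.subdiv b u n₁ n₂).ι h =
      if h = b then n₁ else if h = n₁ then b else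
      if h = n₂ then (if G.ι b = b then n₂ else G.ι b) else
      if h = G.ι b then n₂ else G.ι h :=
  if_pos hh

lemma subdiv_att_of_mem_subdiv (hh : h ∈ (G.subdiv b u n₁ n₂).H) :
    (G.subdiv b u n₁ n₂).att h = if h = n₁ ∨ h = n₂ then some u else G.att h :=
  if_pos hh

lemma subdiv_att_n₁ : (G.subdiv b u n₁ n₂).att n₁ = some u := by
  simp [subdiv]

lemma subdiv_att_n₂ : (G.subdiv b u n₁ n₂).att n₂ = some u := by
  simp [subdiv]

lemma subdiv_att_of_mem (hh : h ∈ G.H) (hn₁ : n₁ ∉ G.H) (hn₂ : n₂ ∉ G.H) :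
    (G.subdiv b u n₁ n₂).att h = G.att h := by
  have : h ≠ n₁ ∧ h ≠ n₂ := ⟨ne_of_mem_of_not_mem hh hn₁, ne_of_mem_of_not_mem hh hn₂⟩
  simp [subdiv, hh, this]

lemma att_eq_some_of_subdiv (hw : (G.subdiv b u n₁ n₂).att h = some w) (hwu : w ≠ u) :
    G.att h = some w := by
  simp only [subdiv] at hw
  split_ifs at hw <;> simp_all

lemma subdiv_ι_n₁ (hb : b ∈ G.H) (hn₁ : n₁ ∉ G.H) : (G.subdiv b u n₁ n₂).ι n₁ = b := by
  simp [subdiv, (ne_of_mem_of_not_mem hb hn₁).symm]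

lemma subdiv_ι_n₂ (hb : b ∈ G.H) (hn₂ : n₂ ∉ G.H) (hn₁₂ : n₁ ≠ n₂) (hbι : G.ι b ≠ b) :
    (G.subdiv b u n₁ n₂).ι n₂ = G.ι b := by
  simp [subdiv, (ne_of_mem_of_not_mem hb hn₂).symm, hn₁₂.symm, hbι]

lemma subdiv_ι_ι_b (hιb : G.ι b ∈ G.H) (hn₁ : n₁ ∉ G.H) (hn₂ : n₂ ∉ G.H) (hbι : G.ι b ≠ b) :
    (G.subdiv b u n₁ n₂).ι (G.ι b) = n₂ := by
  simp [subdiv, hιb, hbι, ne_of_mem_of_not_mem hιb hn₁, ne_of_mem_of_not_mem hιb hn₂]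

lemma subdiv_ι_of_mem (hh : h ∈ G.H) (hn₁ : n₁ ∉ G.H) (hn₂ : n₂ ∉ G.H) (hhb : h ≠ b)
    (hhι : h ≠ G.ι b) : (G.subdiv b u n₁ n₂).ι h = G.ι h := by
  simp [subdiv, hh, hhb, hhι, ne_of_mem_of_not_mem hh hn₁, ne_of_mem_of_not_mem hh hn₂]

lemma att_ι_eq_some_of_subdiv (hh : h ∈ G.H) (hn₁ : n₁ ∉ G.H) (hn₂ : n₂ ∉ G.H)
    (hw : (G.subdiv b u n₁ n₂).att ((G.subdiv b u n₁ n₂).ι h) = some w) (hwu : w ≠ u) :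
    G.att (G.ι h) = some w := by
  have huw : some u ≠ some w := by simpa using hwu.symm
  have hι : (G.subdiv b u n₁ n₂).ι h = n₁ ∨ (G.subdiv b u n₁ n₂).ι h = n₂ ∨
      (G.subdiv b u n₁ n₂).ι h = G.ι h := by
    rw [subdiv_ι_of_mem_subdiv (mem_subdiv_H.2 (.inr (.inr hh)))]
    split_ifs <;> simp_all [ne_of_mem_of_not_mem hh hn₁, ne_of_mem_of_not_mem hh hn₂]
  rcases hι with hι | hι | hι <;> rw [hι] at hw
  · exact absurd (subdiv_att_n₁.symm.trans hw) huw
  · exact absurd (subdiv_att_n₂.symm.trans hw) huw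
  · exact att_eq_some_of_subdiv hw hwu

lemma codegeneracy_e_n₁ : (G.codegeneracy b u n₁ n₂).e n₁ = G.ι b := by
  simp [codegeneracy]

lemma codegeneracy_e_n₂ (hn₁₂ : n₁ ≠ n₂) : (G.codegeneracy b u n₁ n₂).e n₂ = b := by
  simp [codegeneracy, hn₁₂.symm]

lemma codegeneracy_e_of_ne (h₁ : h ≠ n₁) (h₂ : h ≠ n₂) : (G.codegeneracy b u n₁ n₂).e h = h := by
  simp [codegeneracy, h₁, h₂]

lemma codegeneracy_vimg_self : (G.codegeneracy b u n₁ n₂).vimg u = (∅, {b, G.ι b}) :=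
  if_pos rfl

lemma codegeneracy_vimg_of_ne (hvu : v ≠ u) : (G.codegeneracy b u n₁ n₂).vimg v = G.corolla v :=
  if_neg hvu

lemma codegeneracy_e_mem_corolla (hG : G.Wf) (hdeg : G.IsDegen b u n₁ n₂) (hbι : G.ι b ≠ b)
    (hvu : v ≠ u) (hh : h ∈ ((G.subdiv b u n₁ n₂).corolla v).2) :
    (G.codegeneracy b u n₁ n₂).e h ∈ (G.corolla v).2 := by
  obtain ⟨hb, -, hn₁, hn₂, hn₁₂⟩ := hdeg
  obtain ⟨hhS, hv⟩ := mem_corolla_snd.1 hh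
  have huv : some u ≠ some v := by simpa using hvu.symm
  rcases mem_subdiv_H.1 hhS with rfl | rfl | hhG
  · rw [subdiv_att_n₁, subdiv_ι_n₁ hb hn₁, subdiv_att_of_mem hb hn₁ hn₂] at hv
    rw [codegeneracy_e_n₁]
    exact mem_corolla_snd.2 ⟨hG.1 b hb, .inr (by rw [hG.2.1 b hb]; exact hv.resolve_left huv)⟩
  · rw [subdiv_att_n₂, subdiv_ι_n₂ hb hn₂ hn₁₂ hbι, subdiv_att_of_mem (hG.1 b hb) hn₁ hn₂] at hv
    rw [codegeneracy_e_n₂ hn₁₂]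
    exact mem_corolla_snd.2 ⟨hb, .inr (hv.resolve_left huv)⟩
  · rw [codegeneracy_e_of_ne (ne_of_mem_of_not_mem hhG hn₁) (ne_of_mem_of_not_mem hhG hn₂)]
    exact mem_corolla_snd.2 ⟨hhG, hv.imp (att_eq_some_of_subdiv · hvu)
      (att_ι_eq_some_of_subdiv hhG hn₁ hn₂ · hvu)⟩

lemma codegeneracy_e_mem_of_mem_corolla_subdiv_self (hG : G.Wf) (hdeg : G.IsDegen b u n₁ n₂)
    (hh : h ∈ ((G.subdiv b u n₁ n₂).corolla u).2) :
    (G.codegeneracy b u n₁ n₂).e h ∈ ({b, G.ι b} : Finset ℕ) := by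
  obtain ⟨-, hu, hn₁, hn₂, -⟩ := hdeg
  obtain ⟨hhS, hv⟩ := mem_corolla_snd.1 hh
  simp only [codegeneracy]
  split_ifs with h₁ h₂
  · simp
  · simp
  have hhG : h ∈ G.H := ((mem_subdiv_H.1 hhS).resolve_left h₁).resolve_left h₂
  have hnot : ∀ x ∈ G.H, G.att x ≠ some u := fun x hx hxu => hu (hG.2.2.1 x hx u hxu)
  rw [subdiv_att_of_mem hhG hn₁ hn₂] at hv
  by_contra hne
  simp only [Finset.mem_insert, Finset.mem_singleton, not_or] at hne
  rw [subdiv_ι_of_mem hhG hn₁ hn₂ hne.1 hne.2, subdiv_att_of_mem (hG.1 h hhG) hn₁ hn₂] at hv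
  exact hv.elim (hnot h hhG) (hnot _ (hG.1 h hhG))

lemma subdiv_delVertex_H (hG : G.Wf) (hdeg : G.IsDegen b u n₁ n₂) (hbp : G.att b = some p)
    (hpq : p ≠ q) (hbι : G.ι b ≠ b) (huq : u ≠ q) :
    ((G.subdiv b u n₁ n₂).delVertex q).H = ((G.delVertex q).subdiv b u n₁ n₂).H := by
  obtain ⟨hb, -, hn₁, hn₂, -⟩ := hdeg
  have hιb := hG.1 b hb
  ext x
  rw [mem_subdiv_H (G := G.delVertex q)]
  by_cases hx : x = n₁ ∨ x = n₂ ∨ x = b ∨ x = G.ι b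
  · -- each of these half-edges has an end at `u` or `p`, on both sides
    have hxS : x ∈ ((G.subdiv b u n₁ n₂).delVertex q).H := by
      rcases hx with rfl | rfl | rfl | rfl
      · exact mem_delVertex_H_of_att_eq_some (mem_subdiv_H.2 (.inl rfl)) subdiv_att_n₁ huq
      · exact mem_delVertex_H_of_att_eq_some (mem_subdiv_H.2 (.inr (.inl rfl))) subdiv_att_n₂ huq
      · exact mem_delVertex_H_of_att_eq_some (mem_subdiv_H.2 (.inr (.inr hb)))
          ((subdiv_att_of_mem hb hn₁ hn₂).trans hbp) hpq
      · refine mem_delVertex_H_of_att_ι_eq_some (mem_subdiv_H.2 (.inr (.inr hιb))) ?_ huq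
        rw [subdiv_ι_ι_b hιb hn₁ hn₂ hbι, subdiv_att_n₂]
    have hxD : x = n₁ ∨ x = n₂ ∨ x ∈ (G.delVertex q).H := by
      rcases hx with h | h | rfl | rfl
      · exact .inl h
      · exact .inr (.inl h)
      · exact .inr (.inr (mem_delVertex_H_of_att_eq_some hb hbp hpq))
      · exact .inr (.inr (mem_delVertex_H_of_att_ι_eq_some hιb (by rwa [hG.2.1 b hb]) hpq))
    exact iff_of_true hxS hxD
  · simp only [not_or] at hx
    obtain ⟨hx₁, hx₂, hxb, hxι⟩ := hx
    simp only [hx₁, hx₂, false_or, mem_delVertex_H, mem_subdiv_H]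
    by_cases hxG : x ∈ G.H
    · rw [subdiv_att_of_mem hxG hn₁ hn₂, subdiv_ι_of_mem hxG hn₁ hn₂ hxb hxι,
        subdiv_att_of_mem (hG.1 x hxG) hn₁ hn₂]
    · simp [hxG]

lemma subdiv_delVertex (hG : G.Wf) (hdeg : G.IsDegen b u n₁ n₂) (hbp : G.att b = some p)
    (hpq : p ≠ q) (hbι : G.ι b ≠ b) (hq : q ∈ G.V) :
    (G.subdiv b u n₁ n₂).delVertex q = (G.delVertex q).subdiv b u n₁ n₂ := by
  have huq : u ≠ q := fun h => hdeg.2.1 (h ▸ hq)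
  have hH := subdiv_delVertex_H hG hdeg hbp hpq hbι huq
  have hDιb : (G.delVertex q).ι b = G.ι b :=
    delVertex_ι_of_mem (mem_delVertex_H_of_att_eq_some hdeg.1 hbp hpq)
  refine HalfEdgeGraph.ext (Finset.erase_insert_of_ne huq) hH (funext fun x => ?_)
    (funext fun x => ?_)
  · by_cases hx : x ∈ ((G.delVertex q).subdiv b u n₁ n₂).H
    · have hxS := (mem_delVertex_H.1 (hH ▸ hx)).1
      rw [delVertex_ι_of_mem (hH ▸ hx), subdiv_ι_of_mem_subdiv hxS, subdiv_ι_of_mem_subdiv hx, hDιb]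
      split_ifs with h₁ h₂ h₃ h₄ <;> try rfl
      exact (delVertex_ι_of_mem (((mem_subdiv_H.1 hx).resolve_left h₂).resolve_left h₃)).symm
    · exact (if_neg (hH ▸ hx : x ∉ ((G.subdiv b u n₁ n₂).delVertex q).H)).trans (if_neg hx).symm
  · by_cases hx : x ∈ ((G.delVertex q).subdiv b u n₁ n₂).H
    · have hxS := (mem_delVertex_H.1 (hH ▸ hx)).1
      rw [delVertex_att_of_mem (hH ▸ hx), subdiv_att_of_mem_subdiv hxS, subdiv_att_of_mem_subdiv hx]
      by_cases h₁ : x = n₁ ∨ x = n₂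
      · simp [h₁, huq]
      · obtain ⟨hx₁, hx₂⟩ := not_or.1 h₁
        rw [if_neg h₁, if_neg h₁,
          delVertex_att_of_mem (((mem_subdiv_H.1 hx).resolve_left hx₁).resolve_left hx₂)]
    · exact (if_neg (hH ▸ hx : x ∉ ((G.subdiv b u n₁ n₂).delVertex q).H)).trans (if_neg hx).symm

end HalfEdgeGraph

open HalfEdgeGraph

theorem codegeneracy_outer_commute_general (G : HalfEdgeGraph) (hG : G.Wf) (p q b u n₁ n₂ : ℕ)
    (hq : G.IsOuterVertex q) (hpq : p ≠ q)
    (hbp : G.att b = some p) (hbq : G.att (G.ι b) = some q)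
    (hdeg : G.IsDegen b u n₁ n₂) :
    (G.subdiv b u n₁ n₂).delVertex q = (G.delVertex q).subdiv b u n₁ n₂ ∧
    PreGMap.EqOn ((G.subdiv b u n₁ n₂).delVertex q)
      ((G.outerCoface q).comp ((G.delVertex q).codegeneracy b u n₁ n₂))
      ((G.codegeneracy b u n₁ n₂).comp
        ((G.subdiv b u n₁ n₂).outerCoface q)) := by
  have hbι : G.ι b ≠ b := fun h => hpq (Option.some.inj (hbp.symm.trans (h ▸ hbq)))
  have hDιb : (G.delVertex q).ι b = G.ι b :=
    delVertex_ι_of_mem (mem_delVertex_H_of_att_eq_some hdeg.1 hbp hpq)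
  refine ⟨subdiv_delVertex hG hdeg hbp hpq hbι hq.1,
    fun h _ => by simp [PreGMap.comp, outerCoface, codegeneracy, hDιb], fun v _ => ?_⟩
  by_cases hvu : v = u
  · subst hvu
    simp only [PreGMap.comp, outerCoface, codegeneracy_vimg_self, hDιb, corolla_fst,
      Finset.singleton_biUnion, Finset.biUnion_empty, Finset.image_id, Finset.union_empty]
    rw [Finset.union_eq_right.2 (Finset.image_subset_iff.2 fun h hh =>
      codegeneracy_e_mem_of_mem_corolla_subdiv_self hG hdeg hh)]
  · simp only [PreGMap.comp, outerCoface, codegeneracy_vimg_of_ne hvu, corolla_fst,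
      Finset.singleton_biUnion, Finset.image_id]
    rw [Finset.union_eq_right.2 corolla_delVertex_subset, Finset.union_eq_right.2
      (Finset.image_subset_iff.2 fun h hh => codegeneracy_e_mem_corolla hG hdeg hbι hvu hh)]

/-- Let `p` be a vertex of `G` adjacent to the outer vertex
`q` via the edge `b = pq`.  Then the codegeneracy and outer coface relation
holds: `σ^p ∘ δ^q = δ^q ∘ σ^{pq}`, i.e. the square
`(G/q)_{pq} = (G_{pq})/q → G` commutes: deleting the outer vertex and then
collapsing the subdivided edge agrees with first collapsing and then deleting,
as graphical maps. -/
theorem codegeneracy_outer_commute (G : HalfEdgeGraph) (hG : G.Wf) (p q b u n₁ n₂ : ℕ)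
    (hq : G.IsOuterVertex q) (hp : p ∈ G.V) (hpq : p ≠ q)
    (hb : b ∈ G.H) (hbp : G.att b = some p) (hbq : G.att (G.ι b) = some q)
    (hdeg : G.IsDegen b u n₁ n₂) :
    (G.subdiv b u n₁ n₂).delVertex q = (G.delVertex q).subdiv b u n₁ n₂ ∧
    PreGMap.EqOn ((G.subdiv b u n₁ n₂).delVertex q)
      ((G.outerCoface q).comp ((G.delVertex q).codegeneracy b u n₁ n₂))
      ((G.codegeneracy b u n₁ n₂).comp
        ((G.subdiv b u n₁ n₂).outerCoface q)) :=
  codegeneracy_outer_commute_general G hG p q b u n₁ n₂ hq hpq hbp hbq hdeg
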